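/- Let C = Ψ̄_k^{−1}(C_1,…,C_{2^k}) be a linear code over B_k of length n, where each C_i is a nonzero F_{p^r}-linear code of length n. Then the minimum Hamming distance of C equals the minimum over 1 ≤ i ≤ 2^k of the minimum Hamming distances of the C_i: d_H(C) = min_{1 ≤ i ≤ 2^k} d_H(C_i). -/

import Mathlib

/-!
The Gray map is a ring isomorphism `B_k ≃ F_{p^r}^{2^k}`. Indeed, the products
`E_j = idem j = ∏ᵢ (vᵢ or 1 - vᵢ)`, chosen by the binary digits of `j`, satisfy `Φ(E_j) = δ_j`,
`∑ⱼ E_j = 1` and `x E_j = Φ(x)_j E_j`, so `x = ∑ⱼ Φ(x)_j E_j`. Hence a codeword `a` of `C` is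
the same thing as a family of codewords `Φ(a)_i ∈ C_i`, and `a` vanishes at a position exactly
when all of them do. A nonzero `a` has a nonzero stream `Φ(a)_i`, whose support lies in that
of `a`, which gives `d_H(C) ≥ min d_H(C_i)`; a nonzero `c ∈ C_i` placed in stream `i`, with
zero in all other streams, is a codeword of `C` of the same weight, which gives `≤`.
-/

open MvPolynomial

set_option synthInstance.maxHeartbeats 400000
set_option maxHeartbeats 1000000

noncomputable def relIdeal (p r k : ℕ) [Fact p.Prime] : Ideal (MvPolynomial (Fin k) (GaloisField p r)) :=
  Ideal.span (Set.range fun i : Fin k => X i ^ 2 - X i)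

abbrev B (p r k : ℕ) [Fact p.Prime] :=
  MvPolynomial (Fin k) (GaloisField p r) ⧸ relIdeal p r k

noncomputable def v (p r k : ℕ) [Fact p.Prime] (i : Fin k) : B p r k :=
  Ideal.Quotient.mk _ (X i)

lemma v_idem (p r k : ℕ) [Fact p.Prime] (i : Fin k) : v p r k i ^ 2 = v p r k i := by
  have h : (X i ^ 2 - X i : MvPolynomial (Fin k) (GaloisField p r)) ∈ relIdeal p r k :=
    Ideal.subset_span ⟨i, rfl⟩
  have h2 := (Ideal.Quotient.eq_zero_iff_mem).mpr h
  rw [map_sub, map_pow] at h2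
  have h3 := sub_eq_zero.mp h2
  simpa [v] using h3

lemma one_sub_v_idem (p r k : ℕ) [Fact p.Prime] (i : Fin k) :
    (1 - v p r k i) ^ 2 = 1 - v p r k i := by
  have h : (1 - v p r k i) ^ 2 = 1 - 2 * v p r k i + v p r k i ^ 2 := by ring
  rw [h, v_idem]; ring

noncomputable def ThAux (p r k : ℕ) [Fact p.Prime] (S : Finset (Fin k)) :
    MvPolynomial (Fin k) (GaloisField p r) →+* B p r k :=
  (aeval (fun i : Fin k => if i ∈ S then 1 - v p r k i else v p r k i)).toRingHom

lemma ThAux_cond (p r k : ℕ) [Fact p.Prime] (S : Finset (Fin k)) :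
    relIdeal p r k ≤ RingHom.ker (ThAux p r k S) := by
  refine Ideal.span_le.mpr ?_
  rintro _ ⟨i, rfl⟩
  simp only [SetLike.mem_coe, RingHom.mem_ker, ThAux, AlgHom.toRingHom_eq_coe,
    RingHom.coe_coe, map_sub, map_pow, aeval_X]
  by_cases h : i ∈ S
  · rw [if_pos h, one_sub_v_idem, sub_self]
  · rw [if_neg h, v_idem, sub_self]

/-- The automorphism `Θ_S` of `B_k`, determined by `v_i ↦ 1 - v_i` for `i ∈ S` and
`v_i ↦ v_i` otherwise, fixing `F_{p^r}` pointwise. -/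
noncomputable def Th (p r k : ℕ) [Fact p.Prime] (S : Finset (Fin k)) :
    B p r k →+* B p r k :=
  Ideal.Quotient.lift (relIdeal p r k) (ThAux p r k S) (fun _ ha => ThAux_cond p r k S ha)

noncomputable def LamAux (p r k : ℕ) [Fact p.Prime] (π : Equiv.Perm (Fin k)) (t : ℕ) :
    MvPolynomial (Fin k) (GaloisField p r) →+* B p r k :=
  eval₂Hom ((Ideal.Quotient.mk (relIdeal p r k)).comp
      ((C : GaloisField p r →+* MvPolynomial (Fin k) (GaloisField p r)).comp
        (iterateFrobenius (GaloisField p r) p t)))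
    (fun i => v p r k (π i))

lemma LamAux_cond (p r k : ℕ) [Fact p.Prime] (π : Equiv.Perm (Fin k)) (t : ℕ) :
    relIdeal p r k ≤ RingHom.ker (LamAux p r k π t) := by
  refine Ideal.span_le.mpr ?_
  rintro _ ⟨i, rfl⟩
  simp only [SetLike.mem_coe, RingHom.mem_ker, LamAux, map_sub, map_pow, eval₂Hom_X']
  rw [v_idem, sub_self]

/-- The automorphism `Λ_{π,t}` of `B_k`, acting on `F_{p^r}` as the Frobenius power
`α ↦ α^{p^t}` and sending `v_i ↦ v_{π(i)}`. -/
noncomputable def Lam (p r k : ℕ) [Fact p.Prime] (π : Equiv.Perm (Fin k)) (t : ℕ) :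
    B p r k →+* B p r k :=
  Ideal.Quotient.lift (relIdeal p r k) (LamAux p r k π t) (fun _ ha => LamAux_cond p r k π t ha)

noncomputable def PhiAux (p r k : ℕ) [Fact p.Prime] :
    MvPolynomial (Fin k) (GaloisField p r) →+* (Fin (2 ^ k) → GaloisField p r) :=
  Pi.ringHom fun j =>
    eval₂Hom (RingHom.id (GaloisField p r))
      (fun i : Fin k => if Nat.testBit (j : ℕ) (i : ℕ) then 1 else 0)

lemma PhiAux_cond (p r k : ℕ) [Fact p.Prime] :
    relIdeal p r k ≤ RingHom.ker (PhiAux p r k) := by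
  refine Ideal.span_le.mpr ?_
  rintro _ ⟨i, rfl⟩
  simp only [SetLike.mem_coe, RingHom.mem_ker, PhiAux]
  funext j
  simp only [Pi.ringHom, RingHom.pi_apply, map_sub, map_pow, eval₂Hom_X']
  by_cases h : Nat.testBit (j : ℕ) (i : ℕ) <;> simp [h]

/-- The Gray map `Φ_k : B_k → F_{p^r}^{2^k}`: the coordinate indexed by `j` is the
evaluation of (a representative of) an element of `B_k` at the point whose `i`-th
coordinate is the `i`-th binary digit of `j`.  This agrees with the recursive
definition `Φ_k(α + β v_k) = (Φ_{k-1}(α), Φ_{k-1}(α + β))`, `Φ_0 = id`. -/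
noncomputable def Phi (p r k : ℕ) [Fact p.Prime] :
    B p r k →+* (Fin (2 ^ k) → GaloisField p r) :=
  Ideal.Quotient.lift (relIdeal p r k) (PhiAux p r k) (fun _ ha => PhiAux_cond p r k ha)

theorem Fin.eq_of_testBit_eq {k : ℕ} {j j' : Fin (2 ^ k)}
    (h : ∀ i : Fin k, (j : ℕ).testBit i = (j' : ℕ).testBit i) : j = j' := by
  refine Fin.ext (Nat.eq_of_testBit_eq fun m => ?_)
  rcases lt_or_ge m k with hm | hm
  · exact h ⟨m, hm⟩
  · have hk : 2 ^ k ≤ 2 ^ m := Nat.pow_le_pow_right two_pos hm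
    rw [Nat.testBit_lt_two_pow (j.2.trans_le hk), Nat.testBit_lt_two_pow (j'.2.trans_le hk)]

theorem Fin.testBit_bijective (k : ℕ) :
    Function.Bijective fun (j : Fin (2 ^ k)) (i : Fin k) => (j : ℕ).testBit i := by
  rw [Fintype.bijective_iff_injective_and_card]
  exact ⟨fun _ _ h => Fin.eq_of_testBit_eq (congrFun h), by simp⟩

noncomputable def idemFactor (p r k : ℕ) [Fact p.Prime] (j : Fin (2 ^ k)) (i : Fin k) :
    B p r k :=
  if (j : ℕ).testBit i then v p r k i else 1 - v p r k i

noncomputable def idem (p r k : ℕ) [Fact p.Prime] (j : Fin (2 ^ k)) : B p r k :=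
  ∏ i, idemFactor p r k j i

section GrayMap

variable {p r k : ℕ} [Fact p.Prime]

lemma Phi_mk (f : MvPolynomial (Fin k) (GaloisField p r)) (j : Fin (2 ^ k)) :
    Phi p r k (Ideal.Quotient.mk _ f) j =
      eval₂ (RingHom.id _) (fun i : Fin k => if (j : ℕ).testBit i then 1 else 0) f :=
  rfl

lemma Phi_algebraMap (a : GaloisField p r) (j : Fin (2 ^ k)) :
    Phi p r k (algebraMap (GaloisField p r) (B p r k) a) j = a :=
  (Phi_mk (C a) j).trans (eval₂_C _ _ _)

lemma Phi_v (i : Fin k) (j : Fin (2 ^ k)) :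
    Phi p r k (v p r k i) j = if (j : ℕ).testBit i then 1 else 0 :=
  (Phi_mk (X i) j).trans (eval₂_X _ _ _)

lemma v_mul_self (i : Fin k) : v p r k i * v p r k i = v p r k i := by
  rw [← sq, v_idem]

lemma Phi_idemFactor (j j' : Fin (2 ^ k)) (i : Fin k) :
    Phi p r k (idemFactor p r k j i) j' =
      if (j : ℕ).testBit i = (j' : ℕ).testBit i then 1 else 0 := by
  unfold idemFactor
  split_ifs <;> simp_all [Phi_v]

lemma Phi_idem (j : Fin (2 ^ k)) : Phi p r k (idem p r k j) = Pi.single j 1 := by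
  classical
  ext j'
  rw [idem, map_prod, Finset.prod_apply]
  simp only [Phi_idemFactor, Fintype.prod_boole, Pi.single_apply]
  congr 1
  exact propext ⟨fun h => (Fin.eq_of_testBit_eq h).symm, fun h _ => h ▸ rfl⟩

lemma sum_idem : ∑ j, idem p r k j = 1 := by
  classical
  calc ∑ j, idem p r k j
      = ∑ s : Fin k → Bool, ∏ i, if s i then v p r k i else 1 - v p r k i :=
        Fintype.sum_bijective _ (Fin.testBit_bijective k) _ _ fun _ => rfl
    _ = ∏ i, ∑ b : Bool, if b then v p r k i else 1 - v p r k i :=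
        (Fintype.prod_sum fun i (b : Bool) => if b then v p r k i else 1 - v p r k i).symm
    _ = 1 := by simp

lemma v_mul_idemFactor (i : Fin k) (j : Fin (2 ^ k)) :
    v p r k i * idemFactor p r k j i =
      algebraMap _ _ (Phi p r k (v p r k i) j) * idemFactor p r k j i := by
  rw [Phi_v, idemFactor]
  split_ifs
  · rw [map_one, one_mul, v_mul_self]
  · rw [map_zero, zero_mul, mul_sub, mul_one, v_mul_self, sub_self]

lemma v_mul_idem (i : Fin k) (j : Fin (2 ^ k)) :
    v p r k i * idem p r k j = algebraMap _ _ (Phi p r k (v p r k i) j) * idem p r k j := by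
  classical
  rw [idem, ← Finset.mul_prod_erase _ _ (Finset.mem_univ i), ← mul_assoc, ← mul_assoc,
    v_mul_idemFactor]

lemma mul_idem (x : B p r k) (j : Fin (2 ^ k)) :
    x * idem p r k j = algebraMap _ _ (Phi p r k x j) * idem p r k j := by
  obtain ⟨f, rfl⟩ := Ideal.Quotient.mk_surjective x
  induction f using MvPolynomial.induction_on with
  | C a =>
    have hC : Ideal.Quotient.mk (relIdeal p r k) (C a) = algebraMap _ _ a := rfl
    rw [hC, Phi_algebraMap]
  | add f g hf hg => rw [map_add, add_mul, hf, hg, map_add, Pi.add_apply, map_add, add_mul]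
  | mul_X f i hf =>
    have hX : Ideal.Quotient.mk (relIdeal p r k) (X i) = v p r k i := rfl
    rw [map_mul, hX, mul_assoc, v_mul_idem, mul_left_comm, hf, map_mul, Pi.mul_apply, map_mul]
    ring

lemma sum_algebraMap_Phi_mul_idem (x : B p r k) :
    ∑ j, algebraMap _ _ (Phi p r k x j) * idem p r k j = x := by
  simp_rw [← mul_idem, ← Finset.mul_sum, sum_idem, mul_one]

theorem Phi_bijective : Function.Bijective (Phi p r k) := by
  refine Function.bijective_iff_has_inverse.mpr
    ⟨fun y => ∑ j, algebraMap _ _ (y j) * idem p r k j, sum_algebraMap_Phi_mul_idem,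
      fun y => ?_⟩
  ext j'
  simp [Phi_algebraMap, Phi_idem, Pi.single_apply]

end GrayMap

section MinWeight

variable {J F : Type*} [Zero F]

noncomputable def hammingWt (c : J → F) : ℕ := Nat.card {j // c j ≠ 0}

noncomputable def minWeight (S : Set (J → F)) : ℕ :=
  sInf {d | ∃ c ∈ S, c ≠ 0 ∧ hammingWt c = d}

lemma minWeight_le_hammingWt {S : Set (J → F)} {c : J → F} (hc : c ∈ S) (hc0 : c ≠ 0) :
    minWeight S ≤ hammingWt c :=
  Nat.sInf_le ⟨c, hc, hc0, rfl⟩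

lemma exists_hammingWt_eq_minWeight {S : Set (J → F)} (hS : ∃ c ∈ S, c ≠ 0) :
    ∃ c ∈ S, c ≠ 0 ∧ hammingWt c = minWeight S := by
  obtain ⟨c, hc, hc0⟩ := hS
  exact Nat.sInf_mem (s := {d | ∃ c ∈ S, c ≠ 0 ∧ hammingWt c = d}) ⟨_, c, hc, hc0, rfl⟩

lemma hammingWt_le_of_forall_eq_zero [Finite J] {G : Type*} [Zero G] {c : J → F} {c' : J → G}
    (h : ∀ j, c j = 0 → c' j = 0) : hammingWt c' ≤ hammingWt c :=
  Nat.card_le_card_of_injective (fun j => ⟨j.1, mt (h j.1) j.2⟩) fun _ _ hj =>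
    Subtype.ext (by simpa using hj)

lemma hammingWt_congr {G : Type*} [Zero G] {c : J → F} {c' : J → G}
    (h : ∀ j, c j = 0 ↔ c' j = 0) : hammingWt c = hammingWt c' :=
  Nat.card_congr (Equiv.subtypeEquivRight fun j => not_congr (h j))

end MinWeight

section CodePreimage

variable {ι J R F : Type*} [Zero R] [Zero F]

def codePreimage (Φ : R → ι → F) (D : ι → Set (J → F)) : Set (J → R) :=
  {a | ∀ i, (fun b => Φ (a b) i) ∈ D i}

variable (Φ : R ≃ (ι → F)) {D : ι → Set (J → F)}

lemma iInf_minWeight_le_hammingWt [Finite J] (hΦ : Φ 0 = 0) {a : J → R}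
    (ha : a ∈ codePreimage Φ D) (ha0 : a ≠ 0) : ⨅ i, minWeight (D i) ≤ hammingWt a := by
  obtain ⟨j, hj⟩ := Function.ne_iff.mp ha0
  obtain ⟨i, hi⟩ := Function.ne_iff.mp (hΦ ▸ Φ.injective.ne hj)
  calc ⨅ i, minWeight (D i) ≤ minWeight (D i) := ciInf_le (OrderBot.bddBelow _) i
    _ ≤ hammingWt fun b => Φ (a b) i :=
        minWeight_le_hammingWt (ha i) (Function.ne_iff.mpr ⟨j, hi⟩)
    _ ≤ hammingWt a := hammingWt_le_of_forall_eq_zero fun b hb => by simp [hb, hΦ]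

lemma exists_mem_codePreimage_hammingWt_eq [DecidableEq ι] (hΦ : Φ 0 = 0) (h0 : ∀ i, 0 ∈ D i)
    {i : ι} {c : J → F} (hc : c ∈ D i) (hc0 : c ≠ 0) :
    ∃ a ∈ codePreimage Φ D, a ≠ 0 ∧ hammingWt a = hammingWt c := by
  have hsymm : ∀ y, Φ.symm y = 0 ↔ y = 0 := fun y => by rw [Φ.symm_apply_eq, hΦ]
  have hzero : ∀ j, Φ.symm (Pi.single i (c j)) = 0 ↔ c j = 0 := fun j => by
    rw [hsymm, Pi.single_eq_zero_iff]
  refine ⟨fun j => Φ.symm (Pi.single i (c j)), fun i' => ?_, ?_, hammingWt_congr hzero⟩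
  · rcases eq_or_ne i' i with rfl | hi'
    · simpa using hc
    · simp only [Equiv.apply_symm_apply, Pi.single_apply, hi', if_false]
      exact h0 i'
  · obtain ⟨j, hj⟩ := Function.ne_iff.mp hc0
    exact Function.ne_iff.mpr ⟨j, mt (hzero j).mp hj⟩

theorem minWeight_codePreimage [Nonempty ι] [Finite J] (hΦ : Φ 0 = 0)
    (hD : ∀ i, ∃ c ∈ D i, c ≠ 0) (h0 : ∀ i, 0 ∈ D i) :
    minWeight (codePreimage Φ D) = ⨅ i, minWeight (D i) := by
  classical
  obtain ⟨i, hi⟩ : ∃ i, minWeight (D i) = ⨅ i, minWeight (D i) := ciInf_mem _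
  obtain ⟨c, hc, hc0, hwt⟩ := exists_hammingWt_eq_minWeight (hD i)
  obtain ⟨a, ha, ha0, hwa⟩ := exists_mem_codePreimage_hammingWt_eq Φ hΦ h0 hc hc0
  refine le_antisymm ?_ ?_
  · exact (minWeight_le_hammingWt ha ha0).trans (by rw [hwa, hwt, hi])
  · obtain ⟨a', ha', ha'0, hwa'⟩ := exists_hammingWt_eq_minWeight ⟨a, ha, ha0⟩
    exact hwa' ▸ iInf_minWeight_le_hammingWt Φ hΦ ha' ha'0

end CodePreimage

theorem stmt_19_general (p r k n : ℕ) [Fact p.Prime]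
    (D : Fin (2 ^ k) → Submodule (GaloisField p r) (Fin n → GaloisField p r))
    (hD : ∀ i, D i ≠ ⊥) :
    sInf {d : ℕ | ∃ a : Fin n → B p r k,
        (∀ i : Fin (2 ^ k), (fun b => Phi p r k (a b) i) ∈ D i) ∧ a ≠ 0 ∧
        Nat.card {j : Fin n // a j ≠ 0} = d} =
      ⨅ i : Fin (2 ^ k),
        sInf {d : ℕ | ∃ c ∈ D i, c ≠ 0 ∧ Nat.card {j : Fin n // c j ≠ 0} = d} :=
  minWeight_codePreimage (Equiv.ofBijective _ Phi_bijective) (map_zero (Phi p r k))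
    (D := fun i => (D i : Set (Fin n → GaloisField p r)))
    (fun i => (Submodule.ne_bot_iff _).mp (hD i)) (fun i => (D i).zero_mem)

/-- Let `C = Ψ̄_k^{-1}(C_1, …, C_{2^k})` with each `C_i` a nonzero `F_{p^r}`-linear code of
length `n`.  Then the minimum Hamming distance of `C` is the minimum of the minimum
Hamming distances of the `C_i`. -/
theorem stmt_19 (p r k n : ℕ) [Fact p.Prime] [NeZero n] (hr : 1 ≤ r)
    (D : Fin (2 ^ k) → Submodule (GaloisField p r) (Fin n → GaloisField p r))
    (hD : ∀ i, D i ≠ ⊥) :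
    sInf {d : ℕ | ∃ a : Fin n → B p r k,
        (∀ i : Fin (2 ^ k), (fun b => Phi p r k (a b) i) ∈ D i) ∧ a ≠ 0 ∧
        Nat.card {j : Fin n // a j ≠ 0} = d} =
      ⨅ i : Fin (2 ^ k),
        sInf {d : ℕ | ∃ c ∈ D i, c ≠ 0 ∧ Nat.card {j : Fin n // c j ≠ 0} = d} :=
  stmt_19_general p r k n D hD
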